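/- Let ρ : (0,1] → ℝ be a measurable function with ρ(r) > 0 for almost every r ∈ (0,1], such that r ↦ r³ρ(r) and r ↦ r ρ(r) are integrable on (0,1) and the second-moment normalization ∫₀¹ r³ρ(r) dr = 2/π holds, and suppose there is r* ∈ (0,1] such that the map r ↦ r ρ(r) is monotone on (0, r*]. Then there exists a constant C > 0, independent of δ and k, such that for every δ > 0 and every k ∈ ℤ² \ {0}, 0 < 1/λ_δ(k) ≤ C δ² + 1/|k|² ≤ C δ² + 1. (This is the Fourier-symbol form of the uniform bound ‖L_{δ,h}^{−1}‖ ≤ C δ² + A on the inverse of the discrete nonlocal operator.) -/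

import Mathlib

open Real MeasureTheory

/-- Euclidean norm of a nonzero integer vector `k ∈ ℤ²`. -/
noncomputable def knorm2 (k : ℤ × ℤ) : ℝ :=
  Real.sqrt ((k.1 : ℝ) ^ 2 + (k.2 : ℝ) ^ 2)

/-- The 2D Fourier symbol of the nonlocal diffusion operator:
`λ_δ(k) = (4/δ²) ∫₀^{π/2} ∫₀¹ r ρ(r) (1 − cos(r δ |k| cos θ)) dr dθ`. -/
noncomputable def lambdaDelta2 (ρ : ℝ → ℝ) (δ κ : ℝ) : ℝ :=
  (4 / δ ^ 2) * ∫ θ in (0:ℝ)..(π / 2), ∫ r in (0:ℝ)..1,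
    r * ρ r * (1 - Real.cos (r * δ * κ * Real.cos θ))

/-!
With `I(b) = ∫₀¹ r ρ(r) (1 - cos (b r)) dr` (`oneSubCosIntegral`) the symbol is
`λ_δ(k) = (4/δ²) ∫₀^{π/2} I(δ|k| cos θ) dθ`.

If `δ|k| ≤ 1`, the quartic Taylor bound for the cosine gives
`I(b) ≥ (b²/2 - 5b⁴/96) ∫₀¹ r³ρ`, and the normalisation `∫₀¹ r³ρ = 2/π` turns this into
`λ_δ(k) ≥ |k|² - (5/48) δ²|k|⁴`, so that `1/λ_δ(k) ≤ δ² + 1/|k|²`.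

If `δ|k| ≥ 1`, the argument `δ|k| cos θ` stays above `1/2` for `θ ∈ [0, π/3]`. On `[1/2, ∞)` the
function `I` is continuous and positive, and by the Riemann–Lebesgue lemma it tends to
`∫₀¹ rρ > 0`; hence it is bounded below there by some `c > 0`, and `λ_δ(k) ≥ (4π/3) c / δ²`.
-/

open Filter Set Topology

theorem tendsto_integral_mul_cos_atTop {G : ℝ → ℝ} (hG : Integrable G) :
    Tendsto (fun b => ∫ v, G v * cos (b * v)) atTop (𝓝 0) := by
  have hscale : Tendsto (fun b : ℝ => b / (2 * π)) atTop (cocompact ℝ) := by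
    rw [cocompact_eq_atBot_atTop]
    exact (tendsto_id.atTop_div_const (by positivity)).mono_right le_sup_right
  have hRL := (Complex.continuous_re.tendsto 0).comp
    ((Real.zero_at_infty_fourier fun v => (G v : ℂ)).comp hscale)
  rw [Complex.zero_re] at hRL
  refine hRL.congr fun b => ?_
  have hint : Integrable fun v : ℝ => Real.fourierChar (-(v * (b / (2 * π)))) • (G v : ℂ) :=
    (Real.fourierIntegral_convergent_iff' (ContinuousLinearMap.mul ℝ ℝ) _).2 hG.ofReal
  rw [Function.comp_apply, Function.comp_apply, Real.fourier_real_eq, ← RCLike.re_to_complex,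
    ← integral_re hint]
  refine integral_congr_ae (Eventually.of_forall fun v => ?_)
  have h : 2 * π * -(v * (b / (2 * π))) = -(b * v) := by field_simp
  simp only [Circle.smul_def, Real.fourierChar_apply, h, smul_eq_mul]
  rw [RCLike.re_to_complex, Complex.re_mul_ofReal, Complex.exp_ofReal_mul_I_re, cos_neg, mul_comm]

theorem intervalIntegral_pos_of_ae_pos {f : ℝ → ℝ} {a b : ℝ}
    (hf : IntervalIntegrable f volume a b) (hab : a < b)
    (hpos : ∀ᵐ x ∂volume.restrict (Ioc a b), 0 < f x) : 0 < ∫ x in a..b, f x := by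
  rw [intervalIntegral.integral_pos_iff_support_of_nonneg_ae'
    (by rw [uIoc_of_le hab.le]; exact hpos.mono fun x hx => hx.le) hf]
  have hsupp : (Function.support f ∩ Ioc a b : Set ℝ) =ᵐ[volume] (Ioc a b : Set ℝ) := by
    rw [eventuallyEq_set]
    filter_upwards [(ae_restrict_iff' measurableSet_Ioc).1 hpos] with x hx
    exact ⟨fun h => h.2, fun h => ⟨(hx h).ne', h⟩⟩
  rw [measure_congr hsupp, Real.volume_Ioc]
  exact ⟨hab, ENNReal.ofReal_pos.2 (sub_pos.2 hab)⟩

theorem ae_cos_mul_ne_one {b : ℝ} (hb : b ≠ 0) : ∀ᵐ r, cos (b * r) ≠ 1 := by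
  refine measure_mono_null (t := range fun n : ℤ => n * (2 * π) / b) ?_
    ((countable_range _).measure_zero volume)
  intro r hr
  obtain ⟨n, hn⟩ := (cos_eq_one_iff (b * r)).1 (not_not.1 hr)
  exact ⟨n, by field_simp; linarith⟩

theorem mul_sq_le_one_sub_cos_mul {b r : ℝ} (hb0 : 0 ≤ b) (hb1 : b ≤ 1) (hr0 : 0 ≤ r)
    (hr1 : r ≤ 1) : (b ^ 2 / 2 - 5 / 96 * b ^ 4) * r ^ 2 ≤ 1 - cos (b * r) := by
  have hbr : |b * r| ≤ 1 := by
    rw [abs_of_nonneg (mul_nonneg hb0 hr0)]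
    nlinarith
  have h := (abs_le.1 (cos_bound hbr)).2
  rw [← abs_pow, abs_of_nonneg (by positivity)] at h
  have : r ^ 4 ≤ r ^ 2 := pow_le_pow_of_le_one hr0 hr1 (by norm_num)
  nlinarith [pow_nonneg hb0 4]

theorem exists_pos_le_of_tendsto_atTop {f : ℝ → ℝ} {a L : ℝ} (hf : ContinuousOn f (Ici a))
    (hpos : ∀ b ≥ a, 0 < f b) (hL : Tendsto f atTop (𝓝 L)) (hL0 : 0 < L) :
    ∃ c > 0, ∀ b ≥ a, c ≤ f b := by
  obtain ⟨B, hB⟩ := eventually_atTop.1 (hL.eventually (eventually_gt_nhds (half_lt_self hL0)))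
  obtain ⟨x₀, hx₀, hmin⟩ := isCompact_Icc.exists_isMinOn (nonempty_Icc.2 (le_max_left a B))
    (hf.mono Icc_subset_Ici_self)
  refine ⟨min (f x₀) (L / 2), lt_min (hpos x₀ hx₀.1) (half_pos hL0), fun b hb => ?_⟩
  rcases le_total b (max a B) with h | h
  · exact (min_le_left _ _).trans (hmin ⟨hb, h⟩)
  · exact (min_le_right _ _).trans (hB b ((le_max_right a B).trans h)).le

section OneSubCosIntegral

variable {g : ℝ → ℝ}

noncomputable def oneSubCosIntegral (g : ℝ → ℝ) (b : ℝ) : ℝ :=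
  ∫ r in (0:ℝ)..1, g r * (1 - cos (b * r))

theorem intervalIntegrable_mul_one_sub_cos (hg : IntervalIntegrable g volume 0 1) (b : ℝ) :
    IntervalIntegrable (fun r => g r * (1 - cos (b * r))) volume 0 1 :=
  hg.mul_continuousOn (by fun_prop)

theorem continuous_oneSubCosIntegral (hg : IntervalIntegrable g volume 0 1) :
    Continuous (oneSubCosIntegral g) := by
  refine intervalIntegral.continuous_of_dominated_interval (bound := fun r => 2 * ‖g r‖)
    (fun b => (intervalIntegrable_mul_one_sub_cos hg b).def'.aestronglyMeasurable)
    (fun b => Eventually.of_forall fun r _ => ?_) (hg.norm.const_mul 2)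
    (Eventually.of_forall fun r _ => by fun_prop)
  have h2 : ‖1 - cos (b * r)‖ ≤ 2 := by
    rw [Real.norm_eq_abs, abs_le]
    constructor <;> linarith [cos_le_one (b * r), neg_one_le_cos (b * r)]
  rw [norm_mul, mul_comm 2]
  exact mul_le_mul_of_nonneg_left h2 (norm_nonneg _)

theorem intervalIntegrable_oneSubCosIntegral_mul_cos (hg : IntervalIntegrable g volume 0 1)
    (s a b : ℝ) : IntervalIntegrable (fun θ => oneSubCosIntegral g (s * cos θ)) volume a b :=
  ((continuous_oneSubCosIntegral hg).comp (f := fun θ => s * cos θ)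
    (by fun_prop)).intervalIntegrable _ _

theorem oneSubCosIntegral_nonneg (hg : ∀ᵐ r ∂volume.restrict (Ioc 0 1), 0 ≤ g r) (b : ℝ) :
    0 ≤ oneSubCosIntegral g b := by
  rw [oneSubCosIntegral, intervalIntegral.integral_of_le zero_le_one]
  exact integral_nonneg_of_ae <| by
    filter_upwards [hg] with r hr using mul_nonneg hr (sub_nonneg.2 (cos_le_one _))

theorem oneSubCosIntegral_pos (hg : IntervalIntegrable g volume 0 1)
    (hpos : ∀ᵐ r ∂volume.restrict (Ioc 0 1), 0 < g r) {b : ℝ} (hb : b ≠ 0) :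
    0 < oneSubCosIntegral g b := by
  refine intervalIntegral_pos_of_ae_pos (intervalIntegrable_mul_one_sub_cos hg b) zero_lt_one ?_
  filter_upwards [hpos, ae_restrict_of_ae (ae_cos_mul_ne_one hb)] with r hgr hcos
  exact mul_pos hgr (sub_pos.2 ((cos_le_one _).lt_of_ne hcos))

theorem tendsto_oneSubCosIntegral_atTop (hg : IntervalIntegrable g volume 0 1) :
    Tendsto (oneSubCosIntegral g) atTop (𝓝 (∫ r in (0:ℝ)..1, g r)) := by
  have hG : Integrable ((Ioc 0 1).indicator g) :=
    (integrable_indicator_iff measurableSet_Ioc).2 hg.1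
  rw [← sub_zero (∫ r in (0:ℝ)..1, g r)]
  refine (tendsto_const_nhds.sub (tendsto_integral_mul_cos_atTop hG)).congr fun b => ?_
  have hind : ∀ v, (Ioc 0 1).indicator g v * cos (b * v) =
      (Ioc 0 1).indicator (fun r => g r * cos (b * r)) v := fun v =>
    (indicator_mul_left _ g fun r => cos (b * r)).symm
  rw [oneSubCosIntegral, funext hind, integral_indicator measurableSet_Ioc,
    ← intervalIntegral.integral_of_le zero_le_one,
    ← intervalIntegral.integral_sub hg
      (hg.mul_continuousOn (g := fun r => cos (b * r)) (by fun_prop))]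
  simp only [mul_one_sub]

theorem moment_mul_le_oneSubCosIntegral (hg : IntervalIntegrable g volume 0 1)
    (hg0 : ∀ᵐ r ∂volume.restrict (Ioc 0 1), 0 ≤ g r) {b : ℝ} (hb0 : 0 ≤ b) (hb1 : b ≤ 1) :
    (b ^ 2 / 2 - 5 / 96 * b ^ 4) * ∫ r in (0:ℝ)..1, r ^ 2 * g r ≤
      oneSubCosIntegral g b := by
  rw [← intervalIntegral.integral_const_mul, oneSubCosIntegral,
    intervalIntegral.integral_of_le zero_le_one, intervalIntegral.integral_of_le zero_le_one]
  refine integral_mono_ae ((hg.continuousOn_mul (by fun_prop)).const_mul _).1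
    (intervalIntegrable_mul_one_sub_cos hg b).1 ?_
  filter_upwards [hg0, ae_restrict_mem measurableSet_Ioc] with r hgr hr
  calc _ = g r * ((b ^ 2 / 2 - 5 / 96 * b ^ 4) * r ^ 2) := by ring
    _ ≤ _ := mul_le_mul_of_nonneg_left (mul_sq_le_one_sub_cos_mul hb0 hb1 hr.1.le hr.2) hgr

end OneSubCosIntegral

theorem one_le_knorm2 {k : ℤ × ℤ} (hk : k ≠ 0) : 1 ≤ knorm2 k := by
  have hsq : (0 : ℤ) < k.1 ^ 2 + k.2 ^ 2 := by
    rcases not_and_or.1 fun h => hk (Prod.ext h.1 h.2) with h | h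
    · exact lt_add_of_pos_of_le (sq_pos_of_ne_zero h) (sq_nonneg _)
    · exact lt_add_of_le_of_pos (sq_nonneg _) (sq_pos_of_ne_zero h)
  rw [knorm2, Real.one_le_sqrt]
  exact_mod_cast hsq

theorem lambdaDelta2_eq (ρ : ℝ → ℝ) (δ κ : ℝ) :
    lambdaDelta2 ρ δ κ =
      4 / δ ^ 2 * ∫ θ in (0:ℝ)..(π / 2),
        oneSubCosIntegral (fun r => r * ρ r) (δ * κ * cos θ) := by
  unfold lambdaDelta2 oneSubCosIntegral
  congr 1
  refine intervalIntegral.integral_congr fun θ _ => intervalIntegral.integral_congr fun r _ => ?_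
  ring_nf

section LambdaDelta2

variable {ρ : ℝ → ℝ}

theorem lambdaDelta2_pos (hint1 : IntervalIntegrable (fun r => r * ρ r) volume 0 1)
    (hg : ∀ᵐ r ∂volume.restrict (Ioc 0 1), 0 < r * ρ r) {δ κ : ℝ}
    (hδ : δ ≠ 0) (hκ : κ ≠ 0) : 0 < lambdaDelta2 ρ δ κ := by
  rw [lambdaDelta2_eq]
  refine mul_pos (by positivity) (intervalIntegral.intervalIntegral_pos_of_pos_on
    (intervalIntegrable_oneSubCosIntegral_mul_cos hint1 _ _ _)
    (fun θ hθ => oneSubCosIntegral_pos hint1 hg ?_) (by positivity))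
  exact mul_ne_zero (mul_ne_zero hδ hκ)
    (cos_pos_of_mem_Ioo ⟨by linarith [hθ.1, pi_pos], hθ.2⟩).ne'

theorem lambdaDelta2_ge_of_mul_le_one (hint1 : IntervalIntegrable (fun r => r * ρ r) volume 0 1)
    (hg : ∀ᵐ r ∂volume.restrict (Ioc 0 1), 0 ≤ r * ρ r)
    {δ κ : ℝ} (hδ : 0 < δ) (hκ : 0 ≤ κ) (h : δ * κ ≤ 1) :
    π * (∫ r in (0:ℝ)..1, r ^ 3 * ρ r) * (κ ^ 2 / 2 - 5 / 96 * δ ^ 2 * κ ^ 4) ≤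
      lambdaDelta2 ρ δ κ := by
  set M := ∫ r in (0:ℝ)..1, r ^ 3 * ρ r
  set b := δ * κ
  set K := M * (b ^ 2 / 2 - 5 / 96 * b ^ 4)
  have hM : ∫ r in (0:ℝ)..1, r ^ 2 * (r * ρ r) = M :=
    intervalIntegral.integral_congr fun r _ => by ring
  have hM0 : 0 ≤ M := by
    rw [← hM, intervalIntegral.integral_of_le zero_le_one]
    exact integral_nonneg_of_ae (by filter_upwards [hg] with r hr using by positivity)
  have hpointwise : ∀ θ ∈ Icc 0 (π / 2),
      K * cos θ ^ 2 ≤ oneSubCosIntegral (fun r => r * ρ r) (b * cos θ) := by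
    intro θ hθ
    have hc0 : 0 ≤ cos θ := cos_nonneg_of_mem_Icc ⟨by linarith [hθ.1, pi_pos], hθ.2⟩
    have hc1 : cos θ ≤ 1 := cos_le_one θ
    have hbc := moment_mul_le_oneSubCosIntegral hint1 hg (mul_nonneg (by positivity) hc0)
      (mul_le_one₀ h hc0 hc1)
    rw [hM] at hbc
    refine le_trans ?_ hbc
    have hc4 : cos θ ^ 4 ≤ cos θ ^ 2 := pow_le_pow_of_le_one hc0 hc1 (by norm_num)
    calc K * cos θ ^ 2
        ≤ K * cos θ ^ 2 + 5 / 96 * M * b ^ 4 * (cos θ ^ 2 - cos θ ^ 4) :=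
          le_add_of_nonneg_right (mul_nonneg (by positivity) (sub_nonneg.2 hc4))
      _ = _ := by simp only [K]; ring
  have hcos_sq : ∫ θ in (0:ℝ)..(π / 2), K * cos θ ^ 2 = K * (π / 4) := by
    rw [intervalIntegral.integral_const_mul, integral_cos_sq, cos_pi_div_two, sin_zero]
    ring
  have hmono := intervalIntegral.integral_mono_on (by positivity)
    ((by fun_prop : Continuous fun θ => K * cos θ ^ 2).intervalIntegrable _ _)
    (intervalIntegrable_oneSubCosIntegral_mul_cos hint1 b 0 (π / 2)) hpointwise
  rw [hcos_sq] at hmono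
  rw [lambdaDelta2_eq]
  calc _ = 4 / δ ^ 2 * (K * (π / 4)) := by field_simp; ring
    _ ≤ _ := by gcongr

theorem lambdaDelta2_ge_of_one_le_mul (hint1 : IntervalIntegrable (fun r => r * ρ r) volume 0 1)
    (hg : ∀ᵐ r ∂volume.restrict (Ioc 0 1), 0 ≤ r * ρ r)
    {c : ℝ} (hc : ∀ b ≥ 1 / 2, c ≤ oneSubCosIntegral (fun r => r * ρ r) b) {δ κ : ℝ}
    (h : 1 ≤ δ * κ) : 4 * π / 3 * c / δ ^ 2 ≤ lambdaDelta2 ρ δ κ := by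
  set b := δ * κ
  have hnear : π / 3 * c ≤
      ∫ θ in (0:ℝ)..(π / 3), oneSubCosIntegral (fun r => r * ρ r) (b * cos θ) := by
    refine le_of_eq_of_le (by simp) (intervalIntegral.integral_mono_on (by positivity)
      intervalIntegrable_const (intervalIntegrable_oneSubCosIntegral_mul_cos hint1 b _ _)
      fun θ hθ => hc _ ?_)
    have hcos : 1 / 2 ≤ cos θ := cos_pi_div_three ▸
      cos_le_cos_of_nonneg_of_le_pi hθ.1 (by linarith [pi_pos]) hθ.2
    nlinarith
  have hfar : 0 ≤ ∫ θ in (π / 3)..(π / 2), oneSubCosIntegral (fun r => r * ρ r) (b * cos θ) :=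
    intervalIntegral.integral_nonneg (by linarith [pi_pos])
      fun θ _ => oneSubCosIntegral_nonneg hg _
  rw [lambdaDelta2_eq, ← intervalIntegral.integral_add_adjacent_intervals
    (intervalIntegrable_oneSubCosIntegral_mul_cos hint1 b 0 (π / 3))
    (intervalIntegrable_oneSubCosIntegral_mul_cos hint1 b (π / 3) (π / 2))]
  calc 4 * π / 3 * c / δ ^ 2 = 4 / δ ^ 2 * (π / 3 * c) := by ring
    _ ≤ _ := by gcongr; linarith

end LambdaDelta2

theorem one_div_le_sq_add_one_div_sq {l δ κ : ℝ} (hδ : 0 < δ) (hκ : 0 < κ)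
    (h : δ * κ ≤ 1) (hl : κ ^ 2 - 5 / 48 * δ ^ 2 * κ ^ 4 ≤ l) :
    1 / l ≤ δ ^ 2 + 1 / κ ^ 2 := by
  set t := (δ * κ) ^ 2
  have ht : t ≤ 1 := pow_le_one₀ (by positivity) h
  have hlower : κ ^ 2 - 5 / 48 * δ ^ 2 * κ ^ 4 = κ ^ 2 * (1 - 5 / 48 * t) := by ring
  have hl0 : 0 < l := hl.trans_lt' (by rw [hlower]; nlinarith [sq_pos_of_pos hκ])
  rw [div_le_iff₀ hl0]
  calc 1 ≤ (1 + t) * (1 - 5 / 48 * t) := by nlinarith [sq_nonneg (δ * κ)]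
    _ = (δ ^ 2 + 1 / κ ^ 2) * (κ ^ 2 - 5 / 48 * δ ^ 2 * κ ^ 4) := by field_simp; ring
    _ ≤ _ := by gcongr

theorem lambdaDelta2_inverse_uniform_bound_general (ρ : ℝ → ℝ)
    (hpos : ∀ᵐ r ∂(volume.restrict (Set.Ioc (0:ℝ) 1)), 0 < ρ r)
    (hint1 : IntervalIntegrable (fun r => r * ρ r) volume 0 1)
    (hmoment : (∫ r in (0:ℝ)..1, r ^ 3 * ρ r) = 2 / π) :
    ∃ C : ℝ, 0 < C ∧ ∀ δ : ℝ, 0 < δ → ∀ k : ℤ × ℤ, k ≠ 0 →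
      0 < 1 / lambdaDelta2 ρ δ (knorm2 k) ∧
      1 / lambdaDelta2 ρ δ (knorm2 k) ≤ C * δ ^ 2 + 1 / (knorm2 k) ^ 2 ∧
      C * δ ^ 2 + 1 / (knorm2 k) ^ 2 ≤ C * δ ^ 2 + 1 := by
  have hg : ∀ᵐ r ∂volume.restrict (Ioc 0 1), 0 < r * ρ r := by
    filter_upwards [hpos, ae_restrict_mem measurableSet_Ioc] with r hρ hr using mul_pos hr.1 hρ
  have hg0 : ∀ᵐ r ∂volume.restrict (Ioc 0 1), 0 ≤ r * ρ r := hg.mono fun _ h => h.le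
  obtain ⟨c, hc, hcI⟩ := exists_pos_le_of_tendsto_atTop (a := 1 / 2)
    (continuous_oneSubCosIntegral hint1).continuousOn
    (fun b hb => oneSubCosIntegral_pos hint1 hg (by linarith))
    (tendsto_oneSubCosIntegral_atTop hint1) (intervalIntegral_pos_of_ae_pos hint1 one_pos hg)
  refine ⟨max 1 (3 / (4 * π * c)), by positivity, fun δ hδ k hk => ?_⟩
  have hκ := one_le_knorm2 hk
  set κ := knorm2 k
  have hlam := lambdaDelta2_pos hint1 hg hδ.ne' (by positivity : κ ≠ 0)
  refine ⟨by positivity, ?_, by gcongr; exact div_le_one_of_le₀ (one_le_pow₀ hκ) (by positivity)⟩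
  rcases le_total (δ * κ) 1 with h | h
  · have hl := lambdaDelta2_ge_of_mul_le_one hint1 hg0 hδ (by positivity) h
    rw [hmoment, mul_div_cancel₀ _ pi_ne_zero] at hl
    calc _ ≤ δ ^ 2 + 1 / κ ^ 2 :=
          one_div_le_sq_add_one_div_sq hδ (by positivity) h (by linarith)
      _ ≤ _ := by gcongr; exact le_mul_of_one_le_left (by positivity) (le_max_left _ _)
  · calc _ ≤ 1 / (4 * π / 3 * c / δ ^ 2) := one_div_le_one_div_of_le (by positivity)
          (lambdaDelta2_ge_of_one_le_mul hint1 hg0 hcI h)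
      _ = 3 / (4 * π * c) * δ ^ 2 := by field_simp
      _ ≤ _ := le_add_of_le_of_nonneg (by gcongr; exact le_max_right _ _) (by positivity)

theorem lambdaDelta2_inverse_uniform_bound (ρ : ℝ → ℝ) (hmeas : Measurable ρ)
    (hpos : ∀ᵐ r ∂(volume.restrict (Set.Ioc (0:ℝ) 1)), 0 < ρ r)
    (hint3 : IntervalIntegrable (fun r => r ^ 3 * ρ r) volume 0 1)
    (hint1 : IntervalIntegrable (fun r => r * ρ r) volume 0 1)
    (hmoment : (∫ r in (0:ℝ)..1, r ^ 3 * ρ r) = 2 / π)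
    (rs : ℝ) (hrs : rs ∈ Set.Ioc (0:ℝ) 1)
    (hmonotone : AntitoneOn (fun r => r * ρ r) (Set.Ioc (0:ℝ) rs) ∨
                 MonotoneOn (fun r => r * ρ r) (Set.Ioc (0:ℝ) rs)) :
    ∃ C : ℝ, 0 < C ∧ ∀ δ : ℝ, 0 < δ → ∀ k : ℤ × ℤ, k ≠ 0 →
      0 < 1 / lambdaDelta2 ρ δ (knorm2 k) ∧
      1 / lambdaDelta2 ρ δ (knorm2 k) ≤ C * δ ^ 2 + 1 / (knorm2 k) ^ 2 ∧
      C * δ ^ 2 + 1 / (knorm2 k) ^ 2 ≤ C * δ ^ 2 + 1 :=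
  lambdaDelta2_inverse_uniform_bound_general ρ hpos hint1 hmoment
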